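/- arXiv:math/0002105 — 2 statements merged into one kernel-verified Lean document; each statement's English description precedes it below -/
import Mathlib

section
/- (Converse part of Takeuchi's observation.) Let k be a commutative ring, A a unital associative k-algebra and C a counital coassociative k-coalgebra. Suppose act' : (A ⊗ C) ⊗ A → A ⊗ C is a k-linear map satisfying, for all x ∈ A ⊗ C, a, b, a'' ∈ A, a' ∈ A, c ∈ C: (1) act'(x ⊗ 1) = x; (2) act'(act'(x ⊗ a) ⊗ b) = act'(x ⊗ ab); (3) act'((a''·x) ⊗ a) = a''·act'(x ⊗ a), where a''·(a' ⊗ c) := (a''a') ⊗ c; (4) (A ⊗ ε)(act'(x ⊗ a)) = ((A ⊗ ε)(x))·a; (5) (A ⊗ Δ)(act'((a' ⊗ c) ⊗ a)) = Σ act'((a' ⊗ c₍₁₎) ⊗ a_α) ⊗ c₍₂₎^α, where act'((1 ⊗ c₍₂₎) ⊗ a) = Σ a_α ⊗ c₍₂₎^α. Then the k-linear map ψ' : C ⊗ A → A ⊗ C defined by ψ'(c ⊗ a) := act'((1 ⊗ c) ⊗ a) is an entwining map, i.e. it satisfies (i) ψ' ∘ (C ⊗ μ) = (μ ⊗ C)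 ∘ (A ⊗ ψ') ∘ (ψ' ⊗ A); (ii) (A ⊗ Δ) ∘ ψ' = (ψ' ⊗ C) ∘ (C ⊗ ψ') ∘ (Δ ⊗ A); (iii) ψ'(c ⊗ 1) = 1 ⊗ c; (iv) (A ⊗ ε)(ψ'(c ⊗ a)) = ε(c)a. -/
/-!
STATEMENT 2 (Converse part of Takeuchi's observation): if `act'` gives
`A ⊗ C` a unital associative right A-module structure commuting with left
multiplication, for which `A ⊗ ε` and `A ⊗ Δ` are right A-linear, then
`ψ'(c ⊗ a) := act'((1 ⊗ c) ⊗ a)` is an entwining map.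
-/

open TensorProduct

noncomputable section

variable {k A C : Type*} [CommRing k] [Ring A] [Algebra k A]
  [AddCommGroup C] [Module k C] [Coalgebra k C]

/-- The twisted right action associated to a map `ψ : C ⊗ A → A ⊗ C`:
`act((a' ⊗ c) ⊗ a) = (μ ⊗ C)(a' ⊗ ψ(c ⊗ a))`. -/
def act (ψ : C ⊗[k] A →ₗ[k] A ⊗[k] C) :
    (A ⊗[k] C) ⊗[k] A →ₗ[k] A ⊗[k] C :=
  LinearMap.rTensor C (LinearMap.mul' k A) ∘ₗ
    (TensorProduct.assoc k A A C).symm.toLinearMap ∘ₗ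
    LinearMap.lTensor A ψ ∘ₗ
    (TensorProduct.assoc k A C A).toLinearMap

/-- `(A ⊗ ε) : A ⊗ C → A` (composed with the canonical iso `A ⊗ k ≅ A`). -/
def epsA : A ⊗[k] C →ₗ[k] A :=
  (TensorProduct.rid k A).toLinearMap ∘ₗ
    LinearMap.lTensor A (Coalgebra.counit (R := k) (A := C))

/-- Left multiplication by `a` on the first tensor factor of `A ⊗ C`. -/
def lmul (a : A) : A ⊗[k] C →ₗ[k] A ⊗[k] C :=
  LinearMap.rTensor C (LinearMap.mulLeft k a)

/-- The map `ψ' : C ⊗ A → A ⊗ C`, `ψ'(c ⊗ a) = act'((1 ⊗ c) ⊗ a)`. -/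
def psi' (act' : (A ⊗[k] C) ⊗[k] A →ₗ[k] A ⊗[k] C) :
    C ⊗[k] A →ₗ[k] A ⊗[k] C :=
  act' ∘ₗ LinearMap.rTensor A (TensorProduct.mk k A C 1)

end

/-!
The twisted action `act ψ'` built from `ψ'` is determined by its values on `(1 ⊗ c) ⊗ a`,
which are those of `act'`; since `act'` commutes with left multiplication, `act ψ' = act'`.
Each entwining axiom of `ψ'` is then the corresponding module axiom of `act'` evaluated at
`1 ⊗ c`: associativity gives (i), colinearity of `A ⊗ Δ` gives (ii), unitality gives (iii)
and right linearity of `A ⊗ ε` gives (iv).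
-/

variable {k A C : Type*} [CommRing k] [Ring A] [Algebra k A] [AddCommGroup C] [Module k C]

lemma lmul_tmul (a a' : A) (c : C) : lmul (k := k) a (a' ⊗ₜ c) = (a * a') ⊗ₜ c := rfl

lemma act_tmul_tmul (ψ : C ⊗[k] A →ₗ[k] A ⊗[k] C) (a' : A) (c : C) (a : A) :
    act ψ ((a' ⊗ₜ c) ⊗ₜ a) = lmul a' (ψ (c ⊗ₜ a)) := by
  simp only [act, LinearMap.comp_apply, LinearEquiv.coe_coe, assoc_tmul,
    LinearMap.lTensor_tmul]
  induction ψ (c ⊗ₜ a) using TensorProduct.induction_on with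
  | zero => simp
  | tmul b c' => simp [lmul_tmul]
  | add x y hx hy => simp only [tmul_add, map_add, hx, hy]

lemma act_psi' (act' : (A ⊗[k] C) ⊗[k] A →ₗ[k] A ⊗[k] C)
    (h3 : ∀ (x : A ⊗[k] C) (a a'' : A),
      act' (lmul a'' x ⊗ₜ a) = lmul a'' (act' (x ⊗ₜ a))) :
    act (psi' act') = act' := by
  apply TensorProduct.ext'
  intro x a
  induction x using TensorProduct.induction_on with
  | zero => simp
  | tmul a' c =>
    calc act (psi' act') ((a' ⊗ₜ c) ⊗ₜ a)
        = lmul a' (act' (((1 : A) ⊗ₜ c) ⊗ₜ a)) := act_tmul_tmul _ a' c a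
      _ = act' (lmul a' ((1 : A) ⊗ₜ c) ⊗ₜ a) := (h3 _ a a').symm
      _ = act' ((a' ⊗ₜ c) ⊗ₜ a) := by rw [lmul_tmul, mul_one]
  | add x y hx hy => rw [add_tmul, map_add, map_add, hx, hy]

variable [Coalgebra k C]

lemma epsA_tmul (a : A) (c : C) : epsA (a ⊗ₜ[k] c) = Coalgebra.counit (R := k) c • a := by
  simp [epsA]

theorem statement2 (act' : (A ⊗[k] C) ⊗[k] A →ₗ[k] A ⊗[k] C)
    -- (1) act'(x ⊗ 1) = x
    (h1 : ∀ x : A ⊗[k] C, act' (x ⊗ₜ (1 : A)) = x)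
    -- (2) act'(act'(x ⊗ a) ⊗ b) = act'(x ⊗ ab)
    (h2 : ∀ (x : A ⊗[k] C) (a b : A),
      act' (act' (x ⊗ₜ a) ⊗ₜ b) = act' (x ⊗ₜ (a * b)))
    -- (3) act'((a''·x) ⊗ a) = a''·act'(x ⊗ a)
    (h3 : ∀ (x : A ⊗[k] C) (a a'' : A),
      act' (lmul a'' x ⊗ₜ a) = lmul a'' (act' (x ⊗ₜ a)))
    -- (4) (A ⊗ ε)(act'(x ⊗ a)) = ((A ⊗ ε)(x))·a
    (h4 : ∀ (x : A ⊗[k] C) (a : A), epsA (act' (x ⊗ₜ a)) = epsA x * a)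
    -- (5) (A ⊗ Δ)(act'((a' ⊗ c) ⊗ a)) = Σ act'((a' ⊗ c₍₁₎) ⊗ a_α) ⊗ c₍₂₎^α,
    -- where act'((1 ⊗ c₍₂₎) ⊗ a) = Σ a_α ⊗ c₍₂₎^α
    (h5 : ∀ (a' : A) (c : C) (a : A),
      LinearMap.lTensor A (Coalgebra.comul (R := k) (A := C))
          (act' ((a' ⊗ₜ c) ⊗ₜ a)) =
        (TensorProduct.assoc k A C C)
          (LinearMap.rTensor C
            (act' ∘ₗ LinearMap.rTensor A (TensorProduct.mk k A C a'))
            ((TensorProduct.assoc k C A C).symm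
              (LinearMap.lTensor C (psi' act')
                ((TensorProduct.assoc k C C A)
                  (LinearMap.rTensor A (Coalgebra.comul (R := k) (A := C))
                    (c ⊗ₜ a))))))) :
    -- ψ' is an entwining map:
    -- (i) ψ' ∘ (C ⊗ μ) = (μ ⊗ C) ∘ (A ⊗ ψ') ∘ (ψ' ⊗ A)
    (∀ (c : C) (a b : A),
      psi' act' (c ⊗ₜ (a * b)) = act (psi' act') (psi' act' (c ⊗ₜ a) ⊗ₜ b)) ∧
    -- (ii) (A ⊗ Δ) ∘ ψ' = (ψ' ⊗ C) ∘ (C ⊗ ψ') ∘ (Δ ⊗ A)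
    (LinearMap.lTensor A (Coalgebra.comul (R := k) (A := C)) ∘ₗ psi' act' =
      (TensorProduct.assoc k A C C).toLinearMap ∘ₗ
        LinearMap.rTensor C (psi' act') ∘ₗ
        (TensorProduct.assoc k C A C).symm.toLinearMap ∘ₗ
        LinearMap.lTensor C (psi' act') ∘ₗ
        (TensorProduct.assoc k C C A).toLinearMap ∘ₗ
        LinearMap.rTensor A (Coalgebra.comul (R := k) (A := C))) ∧
    -- (iii) ψ'(c ⊗ 1) = 1 ⊗ c
    (∀ c : C, psi' act' (c ⊗ₜ (1 : A)) = (1 : A) ⊗ₜ c) ∧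
    -- (iv) (A ⊗ ε)(ψ'(c ⊗ a)) = ε(c)a
    (∀ (c : C) (a : A),
      epsA (psi' act' (c ⊗ₜ a)) = Coalgebra.counit (R := k) c • a) := by
  refine ⟨fun c a b => ?_, TensorProduct.ext' fun c a => h5 1 c a, fun c => h1 _,
    fun c a => ?_⟩
  · rw [act_psi' act' h3]
    exact (h2 _ a b).symm
  · calc epsA (act' (((1 : A) ⊗ₜ c) ⊗ₜ a))
        = epsA ((1 : A) ⊗ₜ[k] c) * a := h4 _ a
      _ = Coalgebra.counit (R := k) c • a := by rw [epsA_tmul, smul_one_mul]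
end

section
/- Let (A,C,ψ) be a weak entwining structure and let p : A ⊗ C → A ⊗ C be the k-linear map p(a ⊗ c) = (μ ⊗ C)(a ⊗ ψ(c ⊗ 1)). Then p is idempotent: p ∘ p = p. -/
/-!
STATEMENT 3: For a weak entwining structure (A,C,ψ), the map
`p(a ⊗ c) = (μ ⊗ C)(a ⊗ ψ(c ⊗ 1))` is idempotent: p ∘ p = p.
-/

open TensorProduct

noncomputable section

variable {k A C : Type*} [CommRing k] [Ring A] [Algebra k A]
  [AddCommGroup C] [Module k C] [Coalgebra k C]

/-- `ψ₁ : C → A ⊗ C`, `c ↦ ψ(c ⊗ 1)`. -/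
def psiOne (ψ : C ⊗[k] A →ₗ[k] A ⊗[k] C) : C →ₗ[k] A ⊗[k] C :=
  ψ ∘ₗ (TensorProduct.mk k C A).flip 1

/-- `p : A ⊗ C → A ⊗ C`, `p(a ⊗ c) = (μ ⊗ C)(a ⊗ ψ(c ⊗ 1)) = act((a ⊗ c) ⊗ 1)`. -/
def pMap (ψ : C ⊗[k] A →ₗ[k] A ⊗[k] C) : A ⊗[k] C →ₗ[k] A ⊗[k] C :=
  act ψ ∘ₗ (TensorProduct.mk k (A ⊗[k] C) A).flip 1


lemma act_tmul (ψ : C ⊗[k] A →ₗ[k] A ⊗[k] C) (a : A) (c : C) (b : A) :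
    act ψ ((a ⊗ₜ c) ⊗ₜ b) =
      LinearMap.rTensor C (LinearMap.mulLeft k a) (ψ (c ⊗ₜ b)) := by
  simp only [act, LinearMap.comp_apply, LinearEquiv.coe_coe, TensorProduct.assoc_tmul,
    LinearMap.lTensor_tmul]
  induction ψ (c ⊗ₜ b) using TensorProduct.induction_on with
  | zero => simp
  | tmul a' c' => simp [TensorProduct.assoc_symm_tmul, LinearMap.mul'_apply]
  | add x y hx hy => simp only [tmul_add, map_add, hx, hy]

lemma pMap_tmul (ψ : C ⊗[k] A →ₗ[k] A ⊗[k] C) (a : A) (c : C) :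
    pMap ψ (a ⊗ₜ c) =
      LinearMap.rTensor C (LinearMap.mulLeft k a) (ψ (c ⊗ₜ (1 : A))) := by
  simp only [pMap, LinearMap.comp_apply, LinearMap.flip_apply, TensorProduct.mk_apply]
  exact act_tmul ψ a c 1

lemma pMap_comm_mulLeft (ψ : C ⊗[k] A →ₗ[k] A ⊗[k] C) (a : A) (x : A ⊗[k] C) :
    pMap ψ (LinearMap.rTensor C (LinearMap.mulLeft k a) x) =
      LinearMap.rTensor C (LinearMap.mulLeft k a) (pMap ψ x) := by
  induction x using TensorProduct.induction_on with
  | zero => simp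
  | tmul b c =>
    rw [LinearMap.rTensor_tmul, LinearMap.mulLeft_apply, pMap_tmul, pMap_tmul]
    induction ψ (c ⊗ₜ (1 : A)) using TensorProduct.induction_on with
    | zero => simp
    | tmul a' c' => simp [mul_assoc]
    | add x y hx hy => simp only [map_add, hx, hy]
  | add x y hx hy => simp only [map_add, hx, hy]

theorem statement3 (ψ : C ⊗[k] A →ₗ[k] A ⊗[k] C)
    -- (i) ψ ∘ (C ⊗ μ) = (μ ⊗ C) ∘ (A ⊗ ψ) ∘ (ψ ⊗ A)
    (hmul : ∀ (c : C) (a b : A), ψ (c ⊗ₜ (a * b)) = act ψ (ψ (c ⊗ₜ a) ⊗ₜ b))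
    -- (ii) (A ⊗ Δ) ∘ ψ = (ψ ⊗ C) ∘ (C ⊗ ψ) ∘ (Δ ⊗ A)
    (hcomul : LinearMap.lTensor A (Coalgebra.comul (R := k) (A := C)) ∘ₗ ψ =
      (TensorProduct.assoc k A C C).toLinearMap ∘ₗ
        LinearMap.rTensor C ψ ∘ₗ
        (TensorProduct.assoc k C A C).symm.toLinearMap ∘ₗ
        LinearMap.lTensor C ψ ∘ₗ
        (TensorProduct.assoc k C C A).toLinearMap ∘ₗ
        LinearMap.rTensor A (Coalgebra.comul (R := k) (A := C)))
    -- (iii') Σ a_α ε(c^α) = Σ 1_α a ε(c^α)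
    (hcounit' : ∀ (c : C) (a : A),
      epsA (ψ (c ⊗ₜ a)) = epsA (ψ (c ⊗ₜ (1 : A))) * a)
    -- (iv') Σ 1_α ε(c₍₁₎^α) ⊗ c₍₂₎ = Σ 1_α ⊗ c^α
    (hcomul' : ∀ c : C,
      LinearMap.rTensor C (epsA ∘ₗ psiOne ψ)
          (Coalgebra.comul (R := k) (A := C) c) = ψ (c ⊗ₜ (1 : A))) :
    pMap ψ ∘ₗ pMap ψ = pMap ψ := by
  apply TensorProduct.ext'
  intro a c
  have hfix : pMap ψ (ψ (c ⊗ₜ (1 : A))) = ψ (c ⊗ₜ (1 : A)) := by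
    have := hmul c 1 1
    rw [one_mul] at this
    simp only [pMap, LinearMap.comp_apply, LinearMap.flip_apply, TensorProduct.mk_apply]
    exact this.symm
  rw [LinearMap.comp_apply, pMap_tmul, pMap_comm_mulLeft, hfix]
end
end
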